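/- arXiv:1310.8453 — 8 statements merged into one kernel-verified Lean document; each statement's English description precedes it below -/
import Mathlib

section
/- Let V be an (r+1)-dimensional vector space over an algebraically closed field, V' ⊆ V a subspace, V_1 ⊆ V a subspace, and c_1 a nonnegative integer with r+1-c_1 > dim V_1. Then there exists a subspace V^1 ⊇ V_1 of codimension c_1 in V such that dim(V^1 ∩ V') = max{dim(V' ∩ V_1), dim V' − c_1}. -/
/-!
Choose `S` with `V' ⊓ V₁ ≤ S ≤ V'` and `dim S = max (dim (V' ⊓ V₁)) (dim V' - c₁)`; by the
modular law `(V₁ ⊔ S) ⊓ V' = S`. Enlarging `V₁ ⊔ S` inside `(V₁ ⊔ S) ⊔ C`, where `C` is a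
complement of `V₁ ⊔ S ⊔ V'`, does not change the intersection with `V'`, and there is enough
room there to reach codimension `c₁`.
-/

open Module

theorem sup_inf_eq_inf_of_disjoint_sup {α : Type*} [Lattice α] [OrderBot α] [IsModularLattice α]
    {a b c : α} (h : Disjoint c (a ⊔ b)) : (a ⊔ c) ⊓ b = a ⊓ b := by
  refine le_antisymm (le_inf ?_ inf_le_right) (inf_le_inf_right b le_sup_left)
  calc (a ⊔ c) ⊓ b ≤ (a ⊔ c) ⊓ (a ⊔ b) := inf_le_inf_left _ le_sup_right
    _ = a ⊔ c ⊓ (a ⊔ b) := sup_inf_assoc_of_le c le_sup_left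
    _ = a := by rw [h.eq_bot, sup_bot_eq]

namespace Submodule

variable {K V : Type*} [DivisionRing K] [AddCommGroup V] [Module K V] [FiniteDimensional K V]

theorem exists_mem_Icc_finrank_eq {U T : Submodule K V} (hUT : U ≤ T) {n : ℕ}
    (hUn : finrank K U ≤ n) (hnT : n ≤ finrank K T) :
    ∃ S ∈ Set.Icc U T, finrank K S = n := by
  induction n, hUn using Nat.le_induction with
  | base => exact ⟨U, ⟨le_rfl, hUT⟩, rfl⟩
  | succ n _ ih =>
    obtain ⟨S, ⟨hUS, hST⟩, rfl⟩ := ih (Nat.le_of_succ_le hnT)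
    obtain ⟨x, hxT, hxS⟩ := SetLike.exists_of_lt <|
      lt_of_le_of_ne hST fun hS => by rw [hS] at hnT; omega
    refine ⟨S ⊔ span K {x}, ⟨hUS.trans le_sup_left, sup_le hST ?_⟩,
      finrank_sup_span_singleton hxS⟩
    exact (span_singleton_le_iff_mem _ _).2 hxT

theorem exists_le_finrank_eq_inf_eq (A B : Submodule K V) {n : ℕ} (hAn : finrank K A ≤ n)
    (hn : n + finrank K ↥(A ⊔ B) ≤ finrank K V + finrank K A) :
    ∃ W : Submodule K V, A ≤ W ∧ finrank K W = n ∧ W ⊓ B = A ⊓ B := by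
  obtain ⟨C, hC⟩ := (A ⊔ B).exists_isCompl
  have hAC : finrank K ↥(A ⊔ C) = finrank K A + finrank K C := by
    have := finrank_sup_add_finrank_inf_eq A C
    rwa [(hC.disjoint.mono_left le_sup_left).eq_bot, finrank_bot, add_zero] at this
  have hBC := finrank_add_eq_of_isCompl hC
  obtain ⟨W, ⟨hAW, hWC⟩, hW⟩ :=
    exists_mem_Icc_finrank_eq (le_sup_left : A ≤ A ⊔ C) hAn (by omega)
  refine ⟨W, hAW, hW, le_antisymm ?_ (inf_le_inf_right B hAW)⟩
  calc W ⊓ B ≤ (A ⊔ C) ⊓ B := inf_le_inf_right B hWC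
    _ = A ⊓ B := sup_inf_eq_inf_of_disjoint_sup hC.disjoint.symm

end Submodule

theorem exists_codim_subspace_min_intersection_general
    {K V : Type*} [Field K] [AddCommGroup V] [Module K V]
    [FiniteDimensional K V] (r c₁ : ℕ) (hV : finrank K V = r + 1)
    (V' V₁ : Submodule K V) (h : finrank K V₁ + c₁ < r + 1) :
    ∃ W : Submodule K V, V₁ ≤ W ∧ finrank K W + c₁ = r + 1 ∧
      finrank K ↥(W ⊓ V') = max (finrank K ↥(V' ⊓ V₁)) (finrank K V' - c₁) := by
  obtain ⟨S, ⟨hS₁, hS'⟩, hS⟩ := Submodule.exists_mem_Icc_finrank_eq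
    (inf_le_left : V' ⊓ V₁ ≤ V') (le_max_left _ _)
    (max_le (Submodule.finrank_mono inf_le_left) (Nat.sub_le _ c₁))
  have hSV₁ : V₁ ⊓ S = V' ⊓ V₁ :=
    le_antisymm (le_inf (inf_le_right.trans hS') inf_le_left) (le_inf inf_le_right hS₁)
  have hSV' : (V₁ ⊔ S) ⊓ V' = S := by
    rw [sup_comm, sup_inf_assoc_of_le V₁ hS', inf_comm, sup_eq_left.2 hS₁]
  have hdim := Submodule.finrank_sup_add_finrank_inf_eq V₁ S
  have hdim' := Submodule.finrank_sup_add_finrank_inf_eq (V₁ ⊔ S) V'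
  have hdim_le := hV ▸ Submodule.finrank_le ((V₁ ⊔ S) ⊔ V')
  rw [hSV₁] at hdim
  rw [hSV', hS] at hdim'
  -- `dim (V₁ ⊔ S) ≤ r + 1 - c₁`: from `h` when the max is `dim (V' ⊓ V₁)`, and from `hdim_le`
  -- when it is `dim V' - c₁`.
  obtain ⟨W, hSW, hW, hWV'⟩ :=
    Submodule.exists_le_finrank_eq_inf_eq (V₁ ⊔ S) V' (n := r + 1 - c₁) (by omega) (by omega)
  exact ⟨W, le_sup_left.trans hSW, by omega, by rw [hWV', hSV', hS]⟩

/-- for a subspace `V₁` of an `(r+1)`-dimensional space `V` with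
`dim V₁ < r+1-c₁` and any subspace `V'`, there is a codimension-`c₁` subspace `V¹ ⊇ V₁`
with `dim (V¹ ⊓ V') = max (dim (V' ⊓ V₁)) (dim V' - c₁)`. -/
theorem exists_codim_subspace_min_intersection
    {K V : Type*} [Field K] [IsAlgClosed K] [AddCommGroup V] [Module K V]
    [FiniteDimensional K V] (r c₁ : ℕ) (hV : finrank K V = r + 1)
    (V' V₁ : Submodule K V) (h : finrank K V₁ + c₁ < r + 1) :
    ∃ W : Submodule K V, V₁ ≤ W ∧ finrank K W + c₁ = r + 1 ∧
      finrank K ↥(W ⊓ V') = max (finrank K ↥(V' ⊓ V₁)) (finrank K V' - c₁) :=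
  exists_codim_subspace_min_intersection_general r c₁ hV V' V₁ h
end

section
/- Let V be an (r+1)-dimensional vector space over an algebraically closed field, V' ⊆ V a fixed subspace, V_1,...,V_h subspaces of V, and c_1,...,c_h nonnegative integers such that for every subset I ⊆ {1,...,h}, r+1 − Σ_{i∈I} c_i > dim(∩_{i∈I} V_i). Then there exist subspaces V^i ⊇ V_i with codim V^i = c_i for each i, satisfying: (i) dim(∩_{i=1}^h V^i) = r+1 − Σ_{i=1}^h c_i, and (ii) dim((∩_{i=1}^h V^i) ∩ V') ≤ max_{I ⊆ [h]} { dim((∩_{i∈I} V_i) ∩ V') − Σ_{i∉I} c_i }. -/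
/-!
Induct on `∑ i, c i`. To raise `c j` by one, intersect `W j` with a hyperplane `H ⊇ Vs j` chosen
generically, which is possible because over an infinite field a vector space is not a finite union
of proper subspaces: `H` contains none of the finitely many subspaces
`(⨅ i, W i) ⊓ (⨅ i ∈ J, Vs i) ⊓ U` (with `U = ⊤` or `U = V'`) that are not already inside `Vs j`.
Those lose exactly one dimension, which pays for the extra unit of `c j` in the bound (ii); those
inside `Vs j` are unchanged and are accounted for by the bound for `insert j J`. This is why (ii) is
carried for every `J` and also for `U = ⊤`: the latter, together with the hypothesis, shows
`⨅ i, W i ⊄ Vs j`, so that `dim (⨅ i, W i)` also drops by exactly one.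
-/

open Module

section

variable {K V ι : Type*} [Field K] [AddCommGroup V] [Module K V]

theorem Submodule.finrank_inf_add_one_of_not_le [FiniteDimensional K V] {H Z : Submodule K V}
    (hH : finrank K H + 1 = finrank K V) (hZ : ¬ Z ≤ H) :
    finrank K ↥(Z ⊓ H) + 1 = finrank K Z := by
  have hsum := Submodule.finrank_sup_add_finrank_inf_eq Z H
  have hsup : finrank K ↥(Z ⊔ H) ≤ finrank K V := Submodule.finrank_le _
  have hlt : finrank K ↥(Z ⊓ H) < finrank K Z :=
    Submodule.finrank_lt_finrank_of_lt (inf_lt_left.mpr hZ)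
  omega

theorem Submodule.exists_dual_le_ker_forall_not_le_ker [Infinite K] (A : Submodule K V)
    {𝒵 : Set (Submodule K V)} (h𝒵 : 𝒵.Finite) :
    ∃ f : Dual K V, A ≤ LinearMap.ker f ∧ ∀ Z ∈ 𝒵, ¬ Z ≤ A → ¬ Z ≤ LinearMap.ker f := by
  have : Finite {Z ∈ 𝒵 | ¬ Z ≤ A} := (h𝒵.sep _).to_subtype
  choose z hzZ hzA using fun Z : {Z ∈ 𝒵 | ¬ Z ≤ A} ↦ SetLike.not_le_iff_exists.mp Z.2.2
  obtain ⟨φ, hφ⟩ := Module.exists_dual_forall_apply_ne_zero (K := K) (fun Z ↦ A.mkQ (z Z))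
    fun Z ↦ by simpa using hzA Z
  refine ⟨φ ∘ₗ A.mkQ, ?_, fun Z hZ hZA hZφ ↦ hφ ⟨Z, hZ, hZA⟩ (hZφ (hzZ ⟨Z, hZ, hZA⟩))⟩
  simpa using LinearMap.ker_le_ker_comp A.mkQ φ

theorem iInf_update_inf {α : Type*} [CompleteLattice α] [DecidableEq ι] (f : ι → α) (j : ι)
    (a : α) : ⨅ i, Function.update f j (f j ⊓ a) i = (⨅ i, f i) ⊓ a := by
  rw [iInf_split_single _ j, iInf_split_single f j, Function.update_self, inf_right_comm]
  congr 2
  exact iInf_congr fun i ↦ iInf_congr fun hi ↦ Function.update_of_ne hi _ _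

theorem Finset.sum_add_pi_single_one [DecidableEq ι] (c : ι → ℕ) (j : ι) (s : Finset ι) :
    ∑ i ∈ s, (c + Pi.single j 1 : ι → ℕ) i = ∑ i ∈ s, c i + if j ∈ s then 1 else 0 := by
  simp [Finset.sum_add_distrib, Finset.sum_pi_single']

section CodimSystem

variable [Fintype ι] [DecidableEq ι] (Vs : ι → Submodule K V)

def BoundedMeets (c : ι → ℕ) (U M : Submodule K V) : Prop :=
  ∀ J : Finset ι, ∃ I, J ⊆ I ∧
    finrank K ↥(M ⊓ (⨅ i ∈ J, Vs i) ⊓ U) + ∑ i ∈ Iᶜ, c i ≤ finrank K ↥((⨅ i ∈ I, Vs i) ⊓ U)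

structure IsCodimSystem (c : ι → ℕ) (S : Set (Submodule K V)) (W : ι → Submodule K V) :
    Prop where
  le : ∀ i, Vs i ≤ W i
  finrank_add : ∀ i, finrank K (W i) + c i = finrank K V
  finrank_iInf_add : finrank K ↥(⨅ i, W i) + ∑ i, c i = finrank K V
  boundedMeets : ∀ U ∈ S, BoundedMeets Vs c U (⨅ i, W i)

variable {Vs}

theorem BoundedMeets.inf_hyperplane [FiniteDimensional K V] {c : ι → ℕ} {U M H : Submodule K V}
    {j : ι}    (hM : BoundedMeets Vs c U M) (hH : finrank K H + 1 = finrank K V)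
    (hcut : ∀ J : Finset ι, M ⊓ (⨅ i ∈ J, Vs i) ⊓ U ≤ Vs j ∨ ¬ M ⊓ (⨅ i ∈ J, Vs i) ⊓ U ≤ H) :
    BoundedMeets Vs (c + Pi.single j 1) U (M ⊓ H) := by
  intro J
  have hcomm : M ⊓ H ⊓ (⨅ i ∈ J, Vs i) ⊓ U = M ⊓ (⨅ i ∈ J, Vs i) ⊓ U ⊓ H := by
    simp only [inf_right_comm _ H]
  rw [hcomm]
  rcases hcut J with hVj | hnot
  · obtain ⟨I, hJI, hI⟩ := hM (insert j J)
    have hjI : j ∉ Iᶜ := Finset.notMem_compl.mpr (hJI (Finset.mem_insert_self j J))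
    have hins : M ⊓ (⨅ i ∈ insert j J, Vs i) ⊓ U = M ⊓ (⨅ i ∈ J, Vs i) ⊓ U := by
      rw [Finset.iInf_insert, inf_comm (Vs j), ← inf_assoc, inf_right_comm]
      exact inf_eq_left.mpr hVj
    have hle := Submodule.finrank_mono (inf_le_left : M ⊓ (⨅ i ∈ J, Vs i) ⊓ U ⊓ H ≤ _)
    refine ⟨I, (Finset.subset_insert j J).trans hJI, ?_⟩
    rw [Finset.sum_add_pi_single_one, if_neg hjI]
    rw [hins] at hI
    omega
  · obtain ⟨I, hJI, hI⟩ := hM J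
    have hdrop := Submodule.finrank_inf_add_one_of_not_le hH hnot
    refine ⟨I, hJI, ?_⟩
    rw [Finset.sum_add_pi_single_one]
    split_ifs <;> omega

theorem isCodimSystem_zero (S : Set (Submodule K V)) :
    IsCodimSystem Vs 0 S fun _ ↦ ⊤ where
  le _ := le_top
  finrank_add _ := by simp
  finrank_iInf_add := by rw [iInf_top]; simp
  boundedMeets _ _ J := ⟨J, subset_rfl, by rw [iInf_top, top_inf_eq]; simp⟩

theorem IsCodimSystem.not_le_of_finrank_add_lt [FiniteDimensional K V] {c : ι → ℕ}
    {S : Set (Submodule K V)} {W : ι → Submodule K V} (hW : IsCodimSystem Vs c S W) {j : ι}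
    (hj : finrank K (Vs j) + c j < finrank K V) : ¬ W j ≤ Vs j := fun hle ↦ by
  have := Submodule.finrank_mono hle
  have := hW.finrank_add j
  omega

theorem IsCodimSystem.not_iInf_le {c : ι → ℕ} {S : Set (Submodule K V)}
    {W : ι → Submodule K V} (hW : IsCodimSystem Vs c S W) (htop : ⊤ ∈ S) {j : ι}
    (hyp : ∀ I : Finset ι, j ∈ I → finrank K ↥(⨅ i ∈ I, Vs i) + ∑ i ∈ I, c i < finrank K V) :
    ¬ (⨅ i, W i) ≤ Vs j := fun hle ↦ by
  obtain ⟨I, hjI, hI⟩ := hW.boundedMeets ⊤ htop {j}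
  replace hjI : j ∈ I := hjI (Finset.mem_singleton_self j)
  rw [Finset.iInf_singleton, inf_top_eq, inf_top_eq, inf_eq_left.mpr hle] at hI
  have := hyp I hjI
  have := Finset.sum_add_sum_compl I c
  have := hW.finrank_iInf_add
  omega

theorem IsCodimSystem.update_inf_hyperplane [FiniteDimensional K V] {c : ι → ℕ}
    {S : Set (Submodule K V)} {W : ι → Submodule K V} (hW : IsCodimSystem Vs c S W) {j : ι}
    {H : Submodule K V} (hH : finrank K H + 1 = finrank K V) (hVH : Vs j ≤ H)
    (hWH : ¬ W j ≤ H) (hMH : ¬ (⨅ i, W i) ≤ H)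
    (hcut : ∀ U ∈ S, ∀ J : Finset ι,
      (⨅ i, W i) ⊓ (⨅ i ∈ J, Vs i) ⊓ U ≤ Vs j ∨ ¬ (⨅ i, W i) ⊓ (⨅ i ∈ J, Vs i) ⊓ U ≤ H) :
    IsCodimSystem Vs (c + Pi.single j 1) S (Function.update W j (W j ⊓ H)) where
  le i := by
    rcases eq_or_ne i j with rfl | hi
    · simpa using le_inf (hW.le i) hVH
    · simpa [hi] using hW.le i
  finrank_add i := by
    rcases eq_or_ne i j with rfl | hi
    · rw [Function.update_self]
      have := Submodule.finrank_inf_add_one_of_not_le hH hWH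
      have := hW.finrank_add i
      simp only [Pi.add_apply, Pi.single_eq_same]
      omega
    · rw [Function.update_of_ne hi]
      simpa [hi] using hW.finrank_add i
  finrank_iInf_add := by
    rw [iInf_update_inf, Finset.sum_add_pi_single_one, if_pos (Finset.mem_univ j)]
    have := Submodule.finrank_inf_add_one_of_not_le hH hMH
    have := hW.finrank_iInf_add
    omega
  boundedMeets U hU := by
    rw [iInf_update_inf]
    exact (hW.boundedMeets U hU).inf_hyperplane hH (hcut U hU)

theorem IsCodimSystem.exists_add_single [FiniteDimensional K V] [Infinite K] {c : ι → ℕ}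
    {S : Set (Submodule K V)} {W : ι → Submodule K V} (hW : IsCodimSystem Vs c S W)
    (hS : S.Finite) (htop : ⊤ ∈ S) {j : ι}
    (hyp : ∀ I : Finset ι, j ∈ I →
      finrank K ↥(⨅ i ∈ I, Vs i) + ∑ i ∈ I, c i + 1 < finrank K V) :
    ∃ W', IsCodimSystem Vs (c + Pi.single j 1) S W' := by
  have hWj : ¬ W j ≤ Vs j := hW.not_le_of_finrank_add_lt <| by
    have hj := hyp {j} (Finset.mem_singleton_self j)
    rw [Finset.sum_singleton, Finset.iInf_singleton] at hj
    omega
  have hMj : ¬ (⨅ i, W i) ≤ Vs j := hW.not_iInf_le htop fun I hjI ↦ by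
    have := hyp I hjI
    omega
  obtain ⟨f, hVf, hf⟩ := (Vs j).exists_dual_le_ker_forall_not_le_ker
    ((hS.image2 (fun U (J : Finset ι) ↦ (⨅ i, W i) ⊓ (⨅ i ∈ J, Vs i) ⊓ U)
      Set.finite_univ).insert (W j))
  have hcut : ∀ U ∈ S, ∀ J : Finset ι, (⨅ i, W i) ⊓ (⨅ i ∈ J, Vs i) ⊓ U ≤ Vs j ∨
      ¬ (⨅ i, W i) ⊓ (⨅ i ∈ J, Vs i) ⊓ U ≤ LinearMap.ker f := fun U hU J ↦
    (em _).imp_right <| hf _ <| Set.mem_insert_of_mem _ <| Set.mem_image2_of_mem hU trivial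
  have hMf : ¬ (⨅ i, W i) ≤ LinearMap.ker f := by
    simpa [hMj] using hcut ⊤ htop ∅
  have hWf : ¬ W j ≤ LinearMap.ker f := hf _ (Set.mem_insert _ _) hWj
  have hH := Module.Dual.finrank_ker_add_one_of_ne_zero (f := f) (by rintro rfl; simp at hWf)
  exact ⟨_, hW.update_inf_hyperplane hH hVf hWf hMf hcut⟩

variable (Vs) in
theorem exists_isCodimSystem [FiniteDimensional K V] [Infinite K]
    {S : Set (Submodule K V)} (hS : S.Finite) (htop : ⊤ ∈ S)
    (c : ι → ℕ)
    (hyp : ∀ I : Finset ι, I.Nonempty →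
      finrank K ↥(⨅ i ∈ I, Vs i) + ∑ i ∈ I, c i < finrank K V) :
    ∃ W, IsCodimSystem Vs c S W := by
  induction hn : ∑ i, c i generalizing c with
  | zero =>
    obtain rfl : c = 0 := funext fun i ↦ Finset.sum_eq_zero_iff.mp hn i (Finset.mem_univ i)
    exact ⟨_, isCodimSystem_zero S⟩
  | succ n ih =>
    obtain ⟨j, -, hj⟩ := Finset.exists_ne_zero_of_sum_ne_zero (by omega : ∑ i, c i ≠ 0)
    obtain ⟨c₀, rfl⟩ : ∃ c₀, c = c₀ + Pi.single j 1 :=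
      ⟨c - Pi.single j 1, (tsub_add_cancel_of_le fun i ↦ by
        rcases eq_or_ne i j with rfl | hi <;> simp [*, Nat.one_le_iff_ne_zero]).symm⟩
    obtain ⟨W, hW⟩ := ih c₀ (fun I hI ↦ (hyp I hI).trans_le' (by gcongr with i; simp))
      (by rw [Finset.sum_add_pi_single_one, if_pos (Finset.mem_univ j)] at hn; omega)
    refine hW.exists_add_single hS htop fun I hjI ↦ ?_
    have := hyp I ⟨j, hjI⟩
    rwa [Finset.sum_add_pi_single_one, if_pos hjI, ← add_assoc] at this

end CodimSystem

end

/-- Lemma `fundamental`: given subspaces `V₁,…,V_h` of an `(r+1)`-dimensional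
space `V`, a subspace `V'`, and nonnegative integers `c₁,…,c_h` with
`r+1 - ∑_{i∈I} cᵢ > dim (⋂_{i∈I} Vᵢ)` for every (nonempty) `I ⊆ [h]`, there exist subspaces
`Vⁱ ⊇ Vᵢ` of codimension `cᵢ` such that
(i) `dim (⋂ᵢ Vⁱ) = r+1 - ∑ᵢ cᵢ`, and
(ii) `dim ((⋂ᵢ Vⁱ) ⊓ V') ≤ max_{I⊆[h]} (dim ((⋂_{i∈I} Vᵢ) ⊓ V') - ∑_{i∉I} cᵢ)`. -/
theorem exists_codim_system_min_intersection
    {K V : Type*} [Field K] [IsAlgClosed K] [AddCommGroup V] [Module K V]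
    [FiniteDimensional K V] (r h : ℕ) (hV : finrank K V = r + 1)
    (V' : Submodule K V) (Vs : Fin h → Submodule K V) (c : Fin h → ℕ)
    (hyp : ∀ I : Finset (Fin h), I.Nonempty →
      finrank K ↥(⨅ i ∈ I, Vs i) + ∑ i ∈ I, c i < r + 1) :
    ∃ W : Fin h → Submodule K V,
      (∀ i, Vs i ≤ W i) ∧
      (∀ i, finrank K ↥(W i) + c i = r + 1) ∧
      finrank K ↥(⨅ i, W i) + ∑ i, c i = r + 1 ∧
      ∃ I : Finset (Fin h),
        (finrank K ↥((⨅ i, W i) ⊓ V') : ℤ) ≤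
          (finrank K ↥((⨅ i ∈ I, Vs i) ⊓ V') : ℤ) - ∑ i ∈ Iᶜ, (c i : ℤ) := by
  obtain ⟨W, hW⟩ := exists_isCodimSystem Vs (S := {⊤, V'}) (Set.toFinite _)
    (Set.mem_insert _ _) c (hV ▸ hyp)
  obtain ⟨I, -, hI⟩ := hW.boundedMeets V' (by simp) ∅
  have hempty : ⨅ i ∈ (∅ : Finset (Fin h)), Vs i = ⊤ := by simp
  rw [hempty, inf_top_eq] at hI
  refine ⟨W, hW.le, hV ▸ hW.finrank_add, hV ▸ hW.finrank_iInf_add, I, ?_⟩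
  rw [le_sub_iff_add_le]
  exact_mod_cast hI
end

section
/- Let V be an (r+1)-dimensional vector space over an algebraically closed field and V_1,...,V_n subspaces. Let (c_1,...,c_n) be nonnegative integers such that there exists I ⊆ [n] with |I| ≥ 2 minimal with the property r+1 − Σ_{i∈I} c_i ≤ dim(∩_{i∈I} V_i) (i.e., every proper subset I'' ⊊ I satisfies r+1 − Σ_{i∈I''} c_i > dim(∩_{i∈I''} V_i)). Then there exist subspaces V^i ⊇ V_i with codim V^i = c_i for all i ∈ I such that dim(∩_{i∈I} V^i) = dim(∩_{i∈I} V_i). -/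
open Module

/-!
Enlarge the `Vᵢ` one dimension at a time, keeping two invariants: `∑_{j ∈ J} c j ≤ codim ⋂_{j ∈ J} Uⱼ`
for every proper `J ⊂ I`, and `⋂_{i ∈ I} Uᵢ` unchanged. Over an infinite field, a vector `v` can
avoid each of the finitely many proper subspaces `Uᵢ + ⋂_{j ∈ J \ {i}} Uⱼ`. Adjoining such a `v` to
`Uᵢ` does not change `⋂_{j ∈ J} Uⱼ` when that sum is proper, and when the sum is all of `V` the
codimension of the intersection is additive, so the bound persists. For `J = I` the sum cannot be
`V`: additivity together with the bound for `I \ {i}` would contradict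
`codim ⋂_{i ∈ I} Uᵢ ≤ ∑_{i ∈ I} c i`. Hence a maximal family satisfying the invariants has
`codim Uᵢ = c i` for all `i ∈ I`.
-/

open Function Finset

instance Pi.wellFoundedGT {ι : Type*} {α : ι → Type*} [Finite ι] [∀ i, Preorder (α i)]
    [∀ i, WellFoundedGT (α i)] : WellFoundedGT (∀ i, α i) :=
  Pi.wellFoundedLT (α := fun i => (α i)ᵒᵈ)

namespace Finset

variable {ι α : Type*} [CompleteLattice α] [DecidableEq ι]

theorem biInf_eq_inf_biInf_erase (U : ι → α) {i : ι} {J : Finset ι} (hi : i ∈ J) :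
    ⨅ j ∈ J, U j = U i ⊓ ⨅ j ∈ J.erase i, U j := by
  rw [← iInf_insert, insert_erase hi]

theorem biInf_update_of_mem (U : ι → α) {i : ι} {J : Finset ι} (hi : i ∈ J) (x : α) :
    ⨅ j ∈ J, update U i x j = x ⊓ ⨅ j ∈ J.erase i, U j := by
  rw [biInf_eq_inf_biInf_erase _ hi, update_self]
  congr 1
  exact biInf_congr fun j hj => update_of_ne (ne_of_mem_erase hj) _ _

theorem biInf_update_of_notMem (U : ι → α) {i : ι} {J : Finset ι} (hi : i ∉ J) (x : α) :
    ⨅ j ∈ J, update U i x j = ⨅ j ∈ J, U j :=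
  biInf_congr fun _ hj => update_of_ne (ne_of_mem_of_not_mem hj hi) _ _

end Finset

namespace Submodule

variable {K V : Type*} [DivisionRing K] [AddCommGroup V] [Module K V]

theorem sup_span_singleton_inf_eq_inf {A R : Submodule K V} {v : V} (hv : v ∉ A ⊔ R) :
    (A ⊔ K ∙ v) ⊓ R = A ⊓ R := by
  refine le_antisymm (le_inf ?_ inf_le_right) (inf_le_inf_right R le_sup_left)
  calc (A ⊔ K ∙ v) ⊓ R ≤ (A ⊔ K ∙ v) ⊓ (A ⊔ R) := inf_le_inf_left _ le_sup_right
    _ = A ⊔ (K ∙ v) ⊓ (A ⊔ R) := sup_inf_assoc_of_le _ le_sup_left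
    _ = A := by rw [(disjoint_span_singleton_of_notMem hv).symm.eq_bot, sup_bot_eq]

theorem finrank_inf_add_finrank_eq_of_sup_eq_top [FiniteDimensional K V] {A R : Submodule K V}
    (h : A ⊔ R = ⊤) : finrank K ↥(A ⊓ R) + finrank K V = finrank K A + finrank K R := by
  rw [← finrank_top K V, ← h, add_comm]
  exact finrank_sup_add_finrank_inf_eq A R

theorem exists_forall_notMem_of_ne_top [Infinite K] {ι : Type*} [Finite ι]
    (p : ι → Submodule K V) : ∃ v : V, ∀ i, p i ≠ ⊤ → v ∉ p i := by
  by_contra! h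
  obtain ⟨⟨i, hi⟩, htop⟩ := Subspace.exists_eq_top_of_iUnion_eq_univ
    (p := fun i : {i // p i ≠ ⊤} => p i) <| Set.eq_univ_of_forall fun v => by
      obtain ⟨i, hi, hv⟩ := h v
      exact Set.mem_iUnion.mpr ⟨⟨i, hi⟩, hv⟩
  exact hi htop

end Submodule

section CodimSystem

variable {K V ι : Type*} [DivisionRing K] [AddCommGroup V] [Module K V]

/-- `∑_{j ∈ J} c j ≤ codim ⋂_{j ∈ J} U j`, stated without subtraction. -/
def SumLECodim (U : ι → Submodule K V) (c : ι → ℕ) (J : Finset ι) : Prop :=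
  finrank K ↥(⨅ j ∈ J, U j) + ∑ j ∈ J, c j ≤ finrank K V

variable [FiniteDimensional K V] [DecidableEq ι] {U : ι → Submodule K V} {c : ι → ℕ}

theorem SumLECodim.update_sup_span {J : Finset ι} {i : ι} {v : V} (hiJ : i ∈ J)
    (hJ : SumLECodim U c J) (hJi : SumLECodim U c (J.erase i)) (hvU : v ∉ U i)
    (hrank : finrank K ↥(U i) + c i < finrank K V)
    (hgen : U i ⊔ ⨅ j ∈ J.erase i, U j ≠ ⊤ → v ∉ U i ⊔ ⨅ j ∈ J.erase i, U j) :
    SumLECodim (update U i (U i ⊔ K ∙ v)) c J := by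
  unfold SumLECodim at *
  rw [biInf_update_of_mem _ hiJ]
  by_cases htop : U i ⊔ ⨅ j ∈ J.erase i, U j = ⊤
  · have hsup : (U i ⊔ K ∙ v) ⊔ ⨅ j ∈ J.erase i, U j = ⊤ :=
      top_unique (htop ▸ sup_le_sup_right le_sup_left _)
    have hdim := Submodule.finrank_inf_add_finrank_eq_of_sup_eq_top hsup
    rw [Submodule.finrank_sup_span_singleton hvU] at hdim
    rw [← add_sum_erase _ _ hiJ]
    omega
  · rwa [Submodule.sup_span_singleton_inf_eq_inf (hgen htop), ← biInf_eq_inf_biInf_erase _ hiJ]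

theorem exists_lt_update_sumLECodim_biInf_eq [Infinite K] {I : Finset ι} {i : ι} (hi : i ∈ I)
    (hsub : ∀ J ⊂ I, SumLECodim U c J)
    (hI : finrank K V ≤ finrank K ↥(⨅ j ∈ I, U j) + ∑ j ∈ I, c j)
    (hrank : finrank K ↥(U i) + c i < finrank K V) :
    ∃ X, U i < X ∧ (∀ J ⊂ I, SumLECodim (update U i X) c J) ∧
      ⨅ j ∈ I, update U i X j = ⨅ j ∈ I, U j := by
  obtain ⟨v, hv⟩ := Submodule.exists_forall_notMem_of_ne_top
    fun J : I.powerset => U i ⊔ ⨅ j ∈ J.1.erase i, U j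
  have hgen (J) (hJ : J ⊆ I) := hv ⟨J, mem_powerset.2 hJ⟩
  have hI_ne_top : U i ⊔ ⨅ j ∈ I.erase i, U j ≠ ⊤ := by
    intro htop
    have hdim := Submodule.finrank_inf_add_finrank_eq_of_sup_eq_top htop
    have hIi := hsub (I.erase i) (erase_ssubset hi)
    rw [biInf_eq_inf_biInf_erase _ hi, ← add_sum_erase _ _ hi] at hI
    unfold SumLECodim at hIi
    omega
  have hvU : v ∉ U i := fun h => hgen I subset_rfl hI_ne_top (Submodule.mem_sup_left h)
  refine ⟨U i ⊔ K ∙ v, left_lt_sup.2 ((Submodule.span_singleton_le_iff_mem _ _).not.2 hvU),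
    fun J hJ => ?_, ?_⟩
  · by_cases hiJ : i ∈ J
    · exact (hsub J hJ).update_sup_span hiJ (hsub _ ((erase_subset i J).trans_ssubset hJ)) hvU
        hrank (hgen J hJ.subset)
    · rw [SumLECodim, biInf_update_of_notMem _ hiJ]
      exact hsub J hJ
  · rw [biInf_update_of_mem _ hi, Submodule.sup_span_singleton_inf_eq_inf
      (hgen I subset_rfl hI_ne_top), ← biInf_eq_inf_biInf_erase _ hi]

theorem exists_ge_finrank_add_eq_biInf_eq [Infinite K] [Finite ι] {I : Finset ι} (hI₂ : 1 < #I)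
    (hsub : ∀ J ⊂ I, SumLECodim U c J)
    (hI : finrank K V ≤ finrank K ↥(⨅ j ∈ I, U j) + ∑ j ∈ I, c j) :
    ∃ W, U ≤ W ∧ (∀ i ∈ I, finrank K ↥(W i) + c i = finrank K V) ∧
      ⨅ j ∈ I, W j = ⨅ j ∈ I, U j := by
  obtain ⟨W, hUW, ⟨hWsub, hWI⟩, hmax⟩ := exists_maximal_ge_of_wellFoundedGT
    (fun W => (∀ J ⊂ I, SumLECodim W c J) ∧ ⨅ j ∈ I, W j = ⨅ j ∈ I, U j) U ⟨hsub, rfl⟩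
  refine ⟨W, hUW, fun i hi => ?_, hWI⟩
  have hle : finrank K ↥(W i) + c i ≤ finrank K V := by
    have hi_ssubset : {i} ⊂ I :=
      (singleton_subset_iff.2 hi).ssubset_of_ne (by rintro rfl; simp at hI₂)
    have h := hWsub {i} hi_ssubset
    rwa [SumLECodim, Finset.iInf_singleton, sum_singleton] at h
  refine hle.antisymm (not_lt.1 fun hlt => ?_)
  obtain ⟨X, hX, hXsub, hXI⟩ := exists_lt_update_sumLECodim_biInf_eq hi hWsub (hWI ▸ hI) hlt
  exact (lt_update_self_iff.2 hX).not_ge (hmax ⟨hXsub, hXI.trans hWI⟩ (lt_update_self_iff.2 hX).le)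

end CodimSystem

/-- if `I ⊆ [n]` with `|I| ≥ 2` is minimal with the property
`r+1 - ∑_{i∈I} cᵢ ≤ dim (⋂_{i∈I} Vᵢ)` (i.e. every nonempty proper subset `I''` satisfies the
strict reverse inequality), then there are subspaces `Vⁱ ⊇ Vᵢ` of codimension `cᵢ` for `i ∈ I`
with `dim (⋂_{i∈I} Vⁱ) = dim (⋂_{i∈I} Vᵢ)`. -/
theorem exists_codim_system_preserving_intersection
    {K V : Type*} [Field K] [IsAlgClosed K] [AddCommGroup V] [Module K V]
    [FiniteDimensional K V] (r n : ℕ) (hV : finrank K V = r + 1)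
    (Vs : Fin n → Submodule K V) (c : Fin n → ℕ) (I : Finset (Fin n))
    (hcard : 2 ≤ I.card)
    (hI : r + 1 ≤ ∑ i ∈ I, c i + finrank K ↥(⨅ i ∈ I, Vs i))
    (hmin : ∀ I'' ⊂ I, I''.Nonempty →
      finrank K ↥(⨅ i ∈ I'', Vs i) + ∑ i ∈ I'', c i < r + 1) :
    ∃ W : Fin n → Submodule K V,
      (∀ i ∈ I, Vs i ≤ W i) ∧
      (∀ i ∈ I, finrank K ↥(W i) + c i = r + 1) ∧
      finrank K ↥(⨅ i ∈ I, W i) = finrank K ↥(⨅ i ∈ I, Vs i) := by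
  have hsub (J : Finset (Fin n)) (hJ : J ⊂ I) : SumLECodim Vs c J := by
    rcases J.eq_empty_or_nonempty with rfl | hne
    · simpa [SumLECodim] using Submodule.finrank_le _
    · exact (hV ▸ hmin J hJ hne).le
  obtain ⟨W, hVW, hW, hWI⟩ := exists_ge_finrank_add_eq_biInf_eq hcard hsub (by omega)
  exact ⟨W, fun i _ => hVW i, fun i hi => hV ▸ hW i hi, by rw [hWI]⟩
end

section
/- Let V be a finite-dimensional vector space with subspaces V_1,...,V_n satisfying ∩_{i=1}^n V_i = {0}, and suppose W_1,...,W_n are subspaces with V_i ⊂ W_i, dim W_i = dim V_i + 1, and ∩_{i∈I} W_i ⊋ ∩_{i∈I} V_i for every nonempty I ⊆ [n]. Then there exists a finite chain of sets [n] = I_0 ⊇ I_1 ⊋ I_2 ⊋ ... ⊋ I_m ⊋ I_{m+1} = ∅ and vectors w_0, w_1, ..., w_m such that for each j, w_j ∈ (∩_{i∈I_j} W_i) \ (∩_{i∈I_j} V_i) and I_{j+1} = { i ∈ I_j : w_j ∈ V_i }. -/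
open Module

/-!
Pick, for every nonempty index set `I`, a vector `w I` of `⋂_{i∈I} Wᵢ` outside `⋂_{i∈I} Vᵢ`,
and pass from `I` to `{i ∈ I : w I ∈ Vᵢ}`. Since `w I` misses some `Vᵢ` with `i ∈ I`, this
shrinks every nonempty `I` strictly, so iterating it from `[n]` reaches `∅`.
-/

namespace Finset

variable {α : Type*} {f : Finset α → Finset α}

theorem exists_iterate_succ_eq_empty (hf : ∀ s, s.Nonempty → f s ⊂ s) {s : Finset α}
    (hs : s.Nonempty) : ∃ m, f^[m + 1] s = ∅ ∧ ∀ j ≤ m, (f^[j] s).Nonempty := by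
  induction s using Finset.strongInduction with
  | H s ih =>
    rcases (f s).eq_empty_or_nonempty with hfs | hfs
    · exact ⟨0, hfs, fun j hj => by rwa [Nat.le_zero.1 hj]⟩
    obtain ⟨m, hm, hne⟩ := ih (f s) (hf s hs) hfs
    refine ⟨m + 1, hm, fun j hj => ?_⟩
    cases j with
    | zero => exact hs
    | succ j => exact hne j (by omega)

end Finset

theorem Submodule.filter_mem_ssubset_of_notMem_biInf {R M ι : Type*} [Semiring R]
    [AddCommMonoid M] [Module R M] {p : ι → Submodule R M} {I : Finset ι} {x : M}
    [DecidablePred (x ∈ p ·)] (hx : x ∉ ⨅ i ∈ I, p i) : I.filter (x ∈ p ·) ⊂ I := by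
  simp only [Submodule.mem_iInf, not_forall] at hx
  obtain ⟨i, hi, hxi⟩ := hx
  exact Finset.filter_ssubset.2 ⟨i, hi, hxi⟩

theorem exists_chain_of_strict_intersections_general
    {K V : Type*} [Field K] [AddCommGroup V] [Module K V]
    {n : ℕ} (hn : 0 < n)
    (Vs Ws : Fin n → Submodule K V)
    (hstrict : ∀ I : Finset (Fin n), I.Nonempty → (⨅ i ∈ I, Vs i) < (⨅ i ∈ I, Ws i)) :
    ∃ (m : ℕ) (I : ℕ → Finset (Fin n)) (w : ℕ → V),
      I 0 = Finset.univ ∧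
      I (m + 1) = ∅ ∧
      I 1 ⊆ I 0 ∧
      (∀ j, 1 ≤ j → j ≤ m → I (j + 1) ⊂ I j) ∧
      (∀ j ≤ m, w j ∈ (⨅ i ∈ I j, Ws i) ∧ w j ∉ (⨅ i ∈ I j, Vs i)) ∧
      (∀ j ≤ m, ∀ i, i ∈ I (j + 1) ↔ i ∈ I j ∧ w j ∈ Vs i) := by
  classical
  choose! w hwW hwV using fun I (hI : I.Nonempty) => SetLike.exists_of_lt (hstrict I hI)
  set f : Finset (Fin n) → Finset (Fin n) := fun I => I.filter (w I ∈ Vs ·)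
  have hf : ∀ I, I.Nonempty → f I ⊂ I := fun I hI =>
    Submodule.filter_mem_ssubset_of_notMem_biInf (hwV I hI)
  obtain ⟨m, hm, hne⟩ :=
    Finset.exists_iterate_succ_eq_empty hf (Finset.univ_nonempty_iff.2 ⟨⟨0, hn⟩⟩)
  refine ⟨m, fun j => f^[j] Finset.univ, fun j => w (f^[j] Finset.univ), rfl, hm,
    Finset.filter_subset _ _, fun j _ hj => ?_,
    fun j hj => ⟨hwW _ (hne j hj), hwV _ (hne j hj)⟩, fun j _ i => ?_⟩
  · dsimp only
    rw [Function.iterate_succ_apply']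
    exact hf _ (hne j hj)
  · dsimp only
    rw [Function.iterate_succ_apply']
    exact Finset.mem_filter

/-- the chain construction in the proof of Proposition `set`. Given subspaces
`Vᵢ ⊂ Wᵢ` with `dim Wᵢ = dim Vᵢ + 1`, `⋂ᵢ Vᵢ = 0`, and `⋂_{i∈I} Wᵢ ⊋ ⋂_{i∈I} Vᵢ` for every
nonempty `I ⊆ [n]`, there is a chain `[n] = I₀ ⊇ I₁ ⊋ I₂ ⊋ ⋯ ⊋ I_{m+1} = ∅` and vectors
`w₀,…,w_m` with `w_j ∈ (⋂_{i∈I_j} Wᵢ) \ (⋂_{i∈I_j} Vᵢ)` and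
`I_{j+1} = {i ∈ I_j : w_j ∈ Vᵢ}`. -/
theorem exists_chain_of_strict_intersections
    {K V : Type*} [Field K] [IsAlgClosed K] [AddCommGroup V] [Module K V]
    [FiniteDimensional K V] {n : ℕ} (hn : 0 < n)
    (Vs Ws : Fin n → Submodule K V)
    (hle : ∀ i, Vs i ≤ Ws i)
    (hdim : ∀ i, finrank K ↥(Ws i) = finrank K ↥(Vs i) + 1)
    (hbot : (⨅ i, Vs i) = ⊥)
    (hstrict : ∀ I : Finset (Fin n), I.Nonempty → (⨅ i ∈ I, Vs i) < (⨅ i ∈ I, Ws i)) :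
    ∃ (m : ℕ) (I : ℕ → Finset (Fin n)) (w : ℕ → V),
      I 0 = Finset.univ ∧
      I (m + 1) = ∅ ∧
      I 1 ⊆ I 0 ∧
      (∀ j, 1 ≤ j → j ≤ m → I (j + 1) ⊂ I j) ∧
      (∀ j ≤ m, w j ∈ (⨅ i ∈ I j, Ws i) ∧ w j ∉ (⨅ i ∈ I j, Vs i)) ∧
      (∀ j ≤ m, ∀ i, i ∈ I (j + 1) ↔ i ∈ I j ∧ w j ∈ Vs i) :=
  exists_chain_of_strict_intersections_general hn Vs Ws hstrict
end

section
/- Let d : 2^{[n]} → ℤ be the rank-type function d_I = dim(∩_{i∈I} V_i) for subspaces V_1,...,V_n of an (r+1)-dimensional vector space V (with d_∅ = r+1). Fix (m_1,...,m_n) ∈ ℤ^n_{≥0} satisfying r+1 − Σ_{i∈I} m_i > d_I for all I ⊆ [n]. For h ∈ [n], let S_h = { I ⊆ [n] : h ∈ I and r+1 − Σ_{i∈I} m_i = d_I + 1 }. If I_1, I_2 ∈ S_h are both maximal under inclusion in S_h, then I_1 = I_2; i.e., S_h has at most one maximal element, and if I_1, I_2 ∈ S_h then I_1 ∪ I_2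 ∈ S_h. -/
open Module

/-! The function `I ↦ ∑_{i∈I} mᵢ + dim (⋂_{i∈I} Vᵢ)` is supermodular, since the sum is modular and
the dimension of intersections is supermodular by the modular law `dim (A ⊔ B) + dim (A ⊓ B) =
dim A + dim B` together with `A ⊔ B ≤ ⋂_{I₁ ∩ I₂} Vᵢ`. If it is bounded by `r` on nonempty sets,
then adding the tightness equations of `I₁` and `I₂` leaves no room for `I₁ ∪ I₂` or `I₁ ∩ I₂`
(nonempty, as both contain `h`) to fall short, so `I₁ ∪ I₂` is tight as well. -/

theorem Submodule.finrank_biInf_add_finrank_biInf_le {K V ι : Type*} [Field K] [AddCommGroup V]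
    [Module K V] [FiniteDimensional K V] [DecidableEq ι] (Vs : ι → Submodule K V)
    (I J : Finset ι) :
    finrank K ↥(⨅ i ∈ I, Vs i) + finrank K ↥(⨅ i ∈ J, Vs i) ≤
      finrank K ↥(⨅ i ∈ I ∪ J, Vs i) + finrank K ↥(⨅ i ∈ I ∩ J, Vs i) := by
  rw [Finset.iInf_union, ← Submodule.finrank_sup_add_finrank_inf_eq, add_comm]
  gcongr
  refine Submodule.finrank_mono (sup_le ?_ ?_) <;>
    exact le_iInf₂ fun i hi => biInf_le _ (by simp_all)

theorem Finset.union_add_one_eq_of_supermodular {ι : Type*} [DecidableEq ι]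
    (f : Finset ι → ℕ) (hf : ∀ I J, f I + f J ≤ f (I ∪ J) + f (I ∩ J)) {c : ℕ}
    (hlt : ∀ I : Finset ι, I.Nonempty → f I < c) {I J : Finset ι} (hIJ : (I ∩ J).Nonempty)
    (hI : f I + 1 = c) (hJ : f J + 1 = c) : f (I ∪ J) + 1 = c := by
  have := hf I J
  have := hlt _ hIJ
  have := hlt (I ∪ J) (hIJ.mono Finset.inter_subset_union)
  omega

theorem S_h_union_closed_and_unique_maximal_general
    {K V : Type*} [Field K] [AddCommGroup V] [Module K V] [FiniteDimensional K V]
    (r n : ℕ) (Vs : Fin n → Submodule K V)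
    (m : Fin n → ℕ)
    (hm : ∀ I : Finset (Fin n), I.Nonempty →
      ∑ i ∈ I, m i + finrank K ↥(⨅ i ∈ I, Vs i) < r + 1)
    (h : Fin n) (I₁ I₂ : Finset (Fin n))
    (h₁ : h ∈ I₁) (h₂ : h ∈ I₂)
    (e₁ : ∑ i ∈ I₁, m i + finrank K ↥(⨅ i ∈ I₁, Vs i) + 1 = r + 1)
    (e₂ : ∑ i ∈ I₂, m i + finrank K ↥(⨅ i ∈ I₂, Vs i) + 1 = r + 1) :
    (∑ i ∈ I₁ ∪ I₂, m i + finrank K ↥(⨅ i ∈ I₁ ∪ I₂, Vs i) + 1 = r + 1) ∧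
    ((∀ J : Finset (Fin n), h ∈ J →
        ∑ i ∈ J, m i + finrank K ↥(⨅ i ∈ J, Vs i) + 1 = r + 1 → I₁ ⊆ J → I₁ = J) →
     (∀ J : Finset (Fin n), h ∈ J →
        ∑ i ∈ J, m i + finrank K ↥(⨅ i ∈ J, Vs i) + 1 = r + 1 → I₂ ⊆ J → I₂ = J) →
     I₁ = I₂) := by
  have supermodular (I J : Finset (Fin n)) :
      (∑ i ∈ I, m i + finrank K ↥(⨅ i ∈ I, Vs i)) + (∑ i ∈ J, m i + finrank K ↥(⨅ i ∈ J, Vs i)) ≤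
        (∑ i ∈ I ∪ J, m i + finrank K ↥(⨅ i ∈ I ∪ J, Vs i)) +
          (∑ i ∈ I ∩ J, m i + finrank K ↥(⨅ i ∈ I ∩ J, Vs i)) := by
    have := Submodule.finrank_biInf_add_finrank_biInf_le Vs I J
    have : ∑ i ∈ I ∪ J, m i + ∑ i ∈ I ∩ J, m i = ∑ i ∈ I, m i + ∑ i ∈ J, m i :=
      Finset.sum_union_inter
    omega
  have tight_union : ∑ i ∈ I₁ ∪ I₂, m i + finrank K ↥(⨅ i ∈ I₁ ∪ I₂, Vs i) + 1 = r + 1 :=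
    Finset.union_add_one_eq_of_supermodular _ supermodular hm
      ⟨h, Finset.mem_inter.2 ⟨h₁, h₂⟩⟩ e₁ e₂
  refine ⟨tight_union, fun max₁ max₂ => ?_⟩
  have hh : h ∈ I₁ ∪ I₂ := Finset.mem_union_left _ h₁
  exact (max₁ _ hh tight_union Finset.subset_union_left).trans
    (max₂ _ hh tight_union Finset.subset_union_right).symm

/-- with `d_I = dim (⋂_{i∈I} Vᵢ)` and `(m₁,…,m_n)` satisfying
`r+1 - ∑_{i∈I} mᵢ > d_I` for all (nonempty) `I`, the collection
`S_h = {I ∋ h : r+1 - ∑_{i∈I} mᵢ = d_I + 1}` is closed under unions; in particular any two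
maximal elements of `S_h` coincide. -/
theorem S_h_union_closed_and_unique_maximal
    {K V : Type*} [Field K] [AddCommGroup V] [Module K V] [FiniteDimensional K V]
    (r n : ℕ) (hV : finrank K V = r + 1) (Vs : Fin n → Submodule K V)
    (m : Fin n → ℕ)
    (hm : ∀ I : Finset (Fin n), I.Nonempty →
      ∑ i ∈ I, m i + finrank K ↥(⨅ i ∈ I, Vs i) < r + 1)
    (h : Fin n) (I₁ I₂ : Finset (Fin n))
    (h₁ : h ∈ I₁) (h₂ : h ∈ I₂)
    (e₁ : ∑ i ∈ I₁, m i + finrank K ↥(⨅ i ∈ I₁, Vs i) + 1 = r + 1)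
    (e₂ : ∑ i ∈ I₂, m i + finrank K ↥(⨅ i ∈ I₂, Vs i) + 1 = r + 1) :
    (∑ i ∈ I₁ ∪ I₂, m i + finrank K ↥(⨅ i ∈ I₁ ∪ I₂, Vs i) + 1 = r + 1) ∧
    ((∀ J : Finset (Fin n), h ∈ J →
        ∑ i ∈ J, m i + finrank K ↥(⨅ i ∈ J, Vs i) + 1 = r + 1 → I₁ ⊆ J → I₁ = J) →
     (∀ J : Finset (Fin n), h ∈ J →
        ∑ i ∈ J, m i + finrank K ↥(⨅ i ∈ J, Vs i) + 1 = r + 1 → I₂ ⊆ J → I₂ = J) →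
     I₁ = I₂) :=
  S_h_union_closed_and_unique_maximal_general r n Vs m hm h I₁ I₂ h₁ h₂ e₁ e₂
end

section
/- Let I_1, ..., I_{n-1}, I_n be ideals in a polynomial ring k[x_1,...,x_N], each generated by a subset of the variables. Then (I_1 ∩ I_2 ∩ ... ∩ I_{n-1}) + I_n = ((I_1 + I_n) ∩ I_2 ∩ ... ∩ I_{n-1}) + I_n. -/
/-!
An ideal generated by variables is a monomial ideal: whether a polynomial lies in it depends
only on its support. Split `p ∈ (I₁ + Iₙ) ∩ I₂ ∩ ⋯ ∩ I_{n-1}` into the terms divisible by a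
variable of `Iₙ`, which lie in `Iₙ`, and the remaining terms; the latter have support in that of
`p`, so they stay in every `I_j`, and each of them is divisible by a variable of `I₁`.
-/

open MvPolynomial

namespace MvPolynomial

variable {σ R : Type*} [CommSemiring R]

theorem support_sum_monomial_coeff_subset [DecidableEq σ] (p : MvPolynomial σ R)
    (u : Finset (σ →₀ ℕ)) : (∑ μ ∈ u, monomial μ (coeff μ p)).support ⊆ u :=
  support_sum.trans <| Finset.biUnion_subset.mpr fun _ hμ =>
    support_monomial_subset.trans (Finset.singleton_subset_iff.mpr hμ)

theorem mem_ideal_span_X_image_of_support_subset {s : Set σ} {p q : MvPolynomial σ R}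
    (hp : p ∈ Ideal.span (X '' s : Set (MvPolynomial σ R))) (hq : q.support ⊆ p.support) :
    q ∈ Ideal.span (X '' s : Set (MvPolynomial σ R)) := by
  rw [mem_ideal_span_X_image] at hp ⊢
  exact fun μ hμ => hp μ (hq hμ)

theorem mem_iInf_ideal_span_X_image_of_support_subset {ι : Sort*} {s : ι → Set σ}
    {p q : MvPolynomial σ R} (hp : p ∈ ⨅ j, Ideal.span (X '' s j : Set (MvPolynomial σ R)))
    (hq : q.support ⊆ p.support) : q ∈ ⨅ j, Ideal.span (X '' s j : Set (MvPolynomial σ R)) :=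
  Ideal.mem_iInf.mpr fun j => mem_ideal_span_X_image_of_support_subset (Ideal.mem_iInf.mp hp j) hq

theorem ideal_span_X_image_sup_inf_le (s t : Set σ) {K : Ideal (MvPolynomial σ R)}
    (hK : ∀ p ∈ K, ∀ q : MvPolynomial σ R, q.support ⊆ p.support → q ∈ K) :
    (Ideal.span (X '' s) ⊔ Ideal.span (X '' t)) ⊓ K ≤
      (Ideal.span (X '' s) ⊓ K) ⊔ Ideal.span (X '' t) := by
  classical
  rintro p ⟨hst, hpK⟩
  rw [SetLike.mem_coe, ← Ideal.span_union, ← Set.image_union, mem_ideal_span_X_image] at hst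
  let P : (σ →₀ ℕ) → Prop := fun μ => ∃ i ∈ t, μ i ≠ 0
  set u := p.support.filter (¬P ·)
  set v := p.support.filter P
  have hsplit : ∑ μ ∈ u, monomial μ (coeff μ p) + ∑ μ ∈ v, monomial μ (coeff μ p) = p := by
    rw [Finset.sum_filter_not_add_sum_filter, ← as_sum]
  rw [← hsplit]
  have hu := support_sum_monomial_coeff_subset p u
  refine Submodule.add_mem_sup ⟨?_, hK p hpK _ (hu.trans (Finset.filter_subset _ _))⟩ ?_
  · rw [SetLike.mem_coe, mem_ideal_span_X_image]
    intro μ hμ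
    obtain ⟨hμp, hμt⟩ := Finset.mem_filter.mp (hu hμ)
    obtain ⟨i, hi | hi, hμi⟩ := hst μ hμp
    · exact ⟨i, hi, hμi⟩
    · exact absurd ⟨i, hi, hμi⟩ hμt
  · rw [mem_ideal_span_X_image]
    exact fun μ hμ => (Finset.mem_filter.mp (support_sum_monomial_coeff_subset p v hμ)).2

end MvPolynomial

/-- Lemma `monomial property`: for ideals `I₁, I₂, …, I_{n-1}, I_n` of a
polynomial ring each generated by a subset of the variables,
`(I₁ ∩ ⋯ ∩ I_{n-1}) + I_n = ((I₁ + I_n) ∩ I₂ ∩ ⋯ ∩ I_{n-1}) + I_n`.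
Here `I₂,…,I_{n-1}` are encoded as a family over `Fin m`. -/
theorem degree_one_monomial_ideal_sum_inter
    {k : Type*} [Field k] (N m : ℕ)
    (S₁ Sₙ : Set (Fin N)) (S : Fin m → Set (Fin N)) :
    (Ideal.span (X '' S₁ : Set (MvPolynomial (Fin N) k)) ⊓ ⨅ j, Ideal.span (X '' S j))
        ⊔ Ideal.span (X '' Sₙ)
      = ((Ideal.span (X '' S₁) ⊔ Ideal.span (X '' Sₙ)) ⊓ ⨅ j, Ideal.span (X '' S j))
        ⊔ Ideal.span (X '' Sₙ) :=
  le_antisymm (sup_le_sup_right (inf_le_inf_right _ le_sup_left) _) <|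
    sup_le (ideal_span_X_image_sup_inf_le S₁ Sₙ fun _ hp _ =>
      mem_iInf_ideal_span_X_image_of_support_subset hp) le_sup_right
end

section
/- Let I_1 be an ideal generated by a set of variables, and J an arbitrary monomial ideal, in a polynomial ring k[x_1,...,x_N]. If I_1 = A + B where A and B are also generated by sets of variables, then I_1 ∩ J = (A ∩ J) + (B ∩ J). More generally, for two variable-generated ideals I, I' and a monomial ideal J: (I + I') ∩ J = (I ∩ J) + (I' ∩ J). -/
/-!
Write `I_S` for the ideal spanned by the monic monomials with exponents in `S`; variable ideals and
monomial ideals are of this form. A polynomial lies in `I_S` iff each of its terms does, i.e. iff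
every exponent in its support dominates an element of `S`. So if `f ∈ (I_S + I_T) ∩ I_U`, which
is `I_{S ∪ T} ∩ I_U`, every term of `f` lies in `I_S ∩ I_U` or in `I_T ∩ I_U`.
-/

namespace MvPolynomial

variable {σ : Type*} (R : Type*) [CommSemiring R]

noncomputable def monomialIdeal (S : Set (σ →₀ ℕ)) : Ideal (MvPolynomial σ R) :=
  Ideal.span ((fun s => monomial s (1 : R)) '' S)

variable {R}

theorem mem_monomialIdeal {S : Set (σ →₀ ℕ)} {f : MvPolynomial σ R} :
    f ∈ monomialIdeal R S ↔ ∀ d ∈ f.support, ∃ s ∈ S, s ≤ d :=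
  mem_ideal_span_monomial_image

theorem monomialIdeal_union (S T : Set (σ →₀ ℕ)) :
    monomialIdeal R (S ∪ T) = monomialIdeal R S ⊔ monomialIdeal R T := by
  rw [monomialIdeal, Set.image_union, Ideal.span_union]
  rfl

theorem span_X_image_eq_monomialIdeal (A : Set σ) :
    Ideal.span (X '' A : Set (MvPolynomial σ R)) =
      monomialIdeal R ((fun i => Finsupp.single i 1) '' A) := by
  rw [monomialIdeal, Set.image_image]
  rfl

theorem exists_monomialIdeal_eq_span {M : Set (MvPolynomial σ R)}
    (hM : ∀ q ∈ M, ∃ s : σ →₀ ℕ, q = monomial s 1) :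
    ∃ S : Set (σ →₀ ℕ), monomialIdeal R S = Ideal.span M := by
  refine ⟨{s | monomial s 1 ∈ M}, congrArg Ideal.span (Set.ext fun q => ⟨?_, fun hq => ?_⟩)⟩
  · rintro ⟨s, hs, rfl⟩
    exact hs
  · obtain ⟨s, rfl⟩ := hM q hq
    exact ⟨s, hq, rfl⟩

theorem monomial_mem_monomialIdeal_of_le {S : Set (σ →₀ ℕ)} {s d : σ →₀ ℕ} (hs : s ∈ S)
    (hsd : s ≤ d) (c : R) : monomial d c ∈ monomialIdeal R S :=
  mem_monomialIdeal.mpr fun _ he =>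
    ⟨s, hs, Finset.mem_singleton.mp (support_monomial_subset he) ▸ hsd⟩

theorem monomialIdeal_sup_inf (S T U : Set (σ →₀ ℕ)) :
    (monomialIdeal R S ⊔ monomialIdeal R T) ⊓ monomialIdeal R U =
      (monomialIdeal R S ⊓ monomialIdeal R U) ⊔ (monomialIdeal R T ⊓ monomialIdeal R U) := by
  refine le_antisymm (fun f hf => ?_)
    (le_inf (sup_le_sup inf_le_left inf_le_left) (sup_le inf_le_right inf_le_right))
  obtain ⟨hST, hU⟩ := Ideal.mem_inf.mp hf
  rw [← monomialIdeal_union, mem_monomialIdeal] at hST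
  rw [← f.support_sum_monomial_coeff]
  refine Ideal.sum_mem _ fun d hd => ?_
  obtain ⟨u, hu, hud⟩ := mem_monomialIdeal.mp hU d hd
  have hdU := monomial_mem_monomialIdeal_of_le hu hud (coeff d f)
  obtain ⟨s, hs | hs, hsd⟩ := hST d hd
  · exact Ideal.mem_sup_left ⟨monomial_mem_monomialIdeal_of_le hs hsd _, hdU⟩
  · exact Ideal.mem_sup_right ⟨monomial_mem_monomialIdeal_of_le hs hsd _, hdU⟩

end MvPolynomial

open MvPolynomial

/-- for ideals `I`, `I'` generated by sets of variables and a monomial ideal `J`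
in `k[x₁,…,x_N]`, we have `(I + I') ∩ J = (I ∩ J) + (I' ∩ J)`. -/
theorem variable_ideal_sum_inter_monomial
    {k : Type*} [Field k] (N : ℕ)
    (A B : Set (Fin N)) (J : Ideal (MvPolynomial (Fin N) k))
    (hJ : ∃ M : Set (MvPolynomial (Fin N) k),
      (∀ q ∈ M, ∃ s : Fin N →₀ ℕ, q = monomial s 1) ∧ J = Ideal.span M) :
    (Ideal.span (X '' A : Set (MvPolynomial (Fin N) k)) ⊔ Ideal.span (X '' B)) ⊓ J
      = (Ideal.span (X '' A) ⊓ J) ⊔ (Ideal.span (X '' B) ⊓ J) := by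
  obtain ⟨M, hM, rfl⟩ := hJ
  obtain ⟨U, hU⟩ := exists_monomialIdeal_eq_span hM
  rw [← hU, span_X_image_eq_monomialIdeal, span_X_image_eq_monomialIdeal]
  exact monomialIdeal_sup_inf _ _ _
end

section
/- Let I_1,...,I_h be index sets with associated 'irredundant generator' condition: suppose a squarefree monomial x_{1,ℓ_1}⋯x_{n,ℓ_n} lies in I_o (i.e., some I ⊆ [n] satisfies r+1 − Σ_{i∈I}(r+1−d_i−ℓ_i) ≤ d_I). Then any minimal such I (minimal under inclusion among sets satisfying the inequality) satisfies |I| ≤ min{r+1, n}. -/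
/-!
Write `aᵢ = r+1-dᵢ-ℓᵢ`. Dropping one index `j` from a minimal witness `I` with `|I| ≥ 2` can only
enlarge `d_I`, yet turns the inequality `r+1 ≤ d_I + ∑ aᵢ` into a strict reverse one; hence
`aⱼ ≥ 1` for every `j ∈ I`. Then `|I| - 1 ≤ ∑_{I \ j} aᵢ < r+1`.
-/

open Module Finset

section MinimalThreshold

variable {ι : Type*} [DecidableEq ι] (d : Finset ι → ℕ) (a : ι → ℕ) (r : ℕ) {I : Finset ι}

theorem one_le_of_mem_minimal_threshold
    (hd : ∀ j ∈ I, d I ≤ d (I.erase j))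
    (hI : r + 1 ≤ d I + ∑ i ∈ I, a i)
    (hmin : ∀ I' ⊂ I, I'.Nonempty → d I' + ∑ i ∈ I', a i < r + 1)
    (hcard : 2 ≤ #I) {j : ι} (hj : j ∈ I) :
    1 ≤ a j := by
  have hne : (I.erase j).Nonempty := by
    rw [← card_pos, card_erase_of_mem hj]; omega
  have herase := hmin _ (erase_ssubset hj) hne
  have hsplit := sum_erase_add I a hj
  have hmono := hd j hj
  omega

theorem card_le_of_minimal_threshold
    (hd : ∀ j ∈ I, d I ≤ d (I.erase j))
    (hI : r + 1 ≤ d I + ∑ i ∈ I, a i)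
    (hmin : ∀ I' ⊂ I, I'.Nonempty → d I' + ∑ i ∈ I', a i < r + 1) :
    #I ≤ r + 1 := by
  by_cases hcard : #I ≤ 1
  · omega
  obtain ⟨j, hj⟩ : I.Nonempty := card_pos.mp (by omega)
  have hne : (I.erase j).Nonempty := by
    rw [← card_pos, card_erase_of_mem hj]; omega
  have hpos : ∀ i ∈ I.erase j, 1 ≤ a i := fun i hi =>
    one_le_of_mem_minimal_threshold d a r hd hI hmin (by omega) (mem_of_mem_erase hi)
  have hcard_le : #(I.erase j) ≤ ∑ i ∈ I.erase j, a i := by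
    simpa using card_nsmul_le_sum _ a 1 hpos
  have herase := hmin _ (erase_ssubset hj) hne
  have hcard_erase := card_erase_of_mem hj
  omega

end MinimalThreshold

theorem irredundant_generator_length_bound_general
    {K V : Type*} [Field K] [AddCommGroup V] [Module K V] [FiniteDimensional K V]
    (r n : ℕ)
    (Vs : Fin n → Submodule K V) (I : Finset (Fin n)) (ℓ : Fin n → ℕ)
    (hI : r + 1 ≤ finrank K ↥(⨅ i ∈ I, Vs i) +
      ∑ i ∈ I, (r + 1 - finrank K ↥(Vs i) - ℓ i))
    (hmin : ∀ I' ⊂ I, I'.Nonempty →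
      finrank K ↥(⨅ i ∈ I', Vs i) +
        ∑ i ∈ I', (r + 1 - finrank K ↥(Vs i) - ℓ i) < r + 1) :
    I.card ≤ min (r + 1) n := by
  have hd : ∀ j ∈ I, finrank K ↥(⨅ i ∈ I, Vs i) ≤ finrank K ↥(⨅ i ∈ I.erase j, Vs i) :=
    fun j _ => Submodule.finrank_mono (biInf_mono fun _ hi => mem_of_mem_erase hi)
  refine le_min ?_ ?_
  · exact card_le_of_minimal_threshold (fun J => finrank K ↥(⨅ i ∈ J, Vs i))
      (fun i => r + 1 - finrank K ↥(Vs i) - ℓ i) r hd hI hmin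
  · simpa using card_le_univ I

/-- bound on the length of irredundant generators.  If the square-free monomial
determined by `ℓ` (with `1 ≤ ℓᵢ ≤ r+1-dᵢ` for `i ∈ I`) lies in `I_o` via a minimal witness
`I ⊆ [n]` — i.e. `r+1 - ∑_{i∈I}(r+1-dᵢ-ℓᵢ) ≤ d_I` while every nonempty proper subset `I'`
satisfies the strict reverse inequality — then `|I| ≤ min (r+1) n`. -/
theorem irredundant_generator_length_bound
    {K V : Type*} [Field K] [AddCommGroup V] [Module K V] [FiniteDimensional K V]
    (r n : ℕ) (hV : finrank K V = r + 1)
    (Vs : Fin n → Submodule K V) (I : Finset (Fin n)) (ℓ : Fin n → ℕ)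
    (hl : ∀ i ∈ I, 1 ≤ ℓ i ∧ ℓ i ≤ r + 1 - finrank K ↥(Vs i))
    (hI : r + 1 ≤ finrank K ↥(⨅ i ∈ I, Vs i) +
      ∑ i ∈ I, (r + 1 - finrank K ↥(Vs i) - ℓ i))
    (hmin : ∀ I' ⊂ I, I'.Nonempty →
      finrank K ↥(⨅ i ∈ I', Vs i) +
        ∑ i ∈ I', (r + 1 - finrank K ↥(Vs i) - ℓ i) < r + 1) :
    I.card ≤ min (r + 1) n :=
  irredundant_generator_length_bound_general r n Vs I ℓ hI hmin
end
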